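/- arXiv:2011.14102 — 5 statements merged into one kernel-verified Lean document; each statement's English description precedes it below -/
import Mathlib

section
/- If u ∈ ℝ^N satisfies the normal equations (PᵀP + μ AᵀA) u = Pᵀ d + μ Aᵀ b, then its data residual δdᵉ = d − P u satisfies the M×M data-space system (G Gᵀ + μ I) δdᵉ = μ (d − G b), where G = P A⁻¹. -/
open Matrix

/-- If `u ∈ ℝ^N` satisfies the normal equations `(PᵀP + μ AᵀA) u = Pᵀ d + μ Aᵀ b`, then its
data residual `δdᵉ = d − P u` satisfies the M×M data-space system
`(G Gᵀ + μ I) δdᵉ = μ (d − G b)`, where `G = P A⁻¹`. -/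
theorem stmt_5 (N M : ℕ) (_hN : 0 < N) (_hM : 0 < M)
    (A : Matrix (Fin N) (Fin N) ℝ) (hA : IsUnit A)
    (P : Matrix (Fin M) (Fin N) ℝ) (b : Fin N → ℝ) (d : Fin M → ℝ)
    (μ : ℝ) (hμ : 0 < μ)
    (G : Matrix (Fin M) (Fin N) ℝ) (hG : G = P * A⁻¹)
    (u : Fin N → ℝ)
    (hu : (Pᵀ * P + μ • (Aᵀ * A)).mulVec u = Pᵀ.mulVec d + μ • Aᵀ.mulVec b) :
    (G * Gᵀ + μ • (1 : Matrix (Fin M) (Fin M) ℝ)).mulVec (d - P.mulVec u)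
      = μ • (d - G.mulVec b) := by
  have hdet : IsUnit A.det := (isUnit_iff_isUnit_det A).mp hA
  have hAinvA : A⁻¹ * A = 1 := nonsing_inv_mul A hdet
  have hAAinv : A * A⁻¹ = 1 := mul_nonsing_inv A hdet
  have key : Pᵀ.mulVec (d - P.mulVec u)
      = μ • (Aᵀ.mulVec (A.mulVec u) - Aᵀ.mulVec b) := by
    have h := hu
    rw [add_mulVec, smul_mulVec, ← mulVec_mulVec, ← mulVec_mulVec] at h
    have h2 : Pᵀ *ᵥ P *ᵥ u = Pᵀ *ᵥ d + μ • Aᵀ *ᵥ b - μ • Aᵀ *ᵥ A *ᵥ u := by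
      rw [← h]; abel
    rw [mulVec_sub, h2]
    module
  have hTinv : (A⁻¹)ᵀ * Aᵀ = 1 := by
    rw [← transpose_mul, hAAinv, transpose_one]
  calc (G * Gᵀ + μ • (1 : Matrix (Fin M) (Fin M) ℝ)).mulVec (d - P.mulVec u)
      = G.mulVec (Gᵀ.mulVec (d - P.mulVec u)) + μ • (d - P.mulVec u) := by
        rw [add_mulVec, smul_mulVec, one_mulVec, mulVec_mulVec]
    _ = μ • (d - G.mulVec b) := by
        subst hG
        have e2 : P * A⁻¹ * A⁻¹ᵀ * Aᵀ = P * A⁻¹ := by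
          rw [Matrix.mul_assoc (P * A⁻¹), hTinv, Matrix.mul_one]
        have e3 : P * A⁻¹ * A⁻¹ᵀ * Aᵀ * A = P := by
          rw [e2, Matrix.mul_assoc, hAinvA, Matrix.mul_one]
        rw [transpose_mul, ← mulVec_mulVec _ (A⁻¹)ᵀ Pᵀ, key, mulVec_smul, mulVec_sub]
        simp only [mulVec_mulVec, ← Matrix.mul_assoc]
        rw [hTinv, Matrix.one_mul, Matrix.one_mulVec, mulVec_smul, mulVec_sub,
          mulVec_mulVec, Matrix.mul_assoc, hAinvA, Matrix.mul_one]
        module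
end

section
/- The minimal value of the penalty objective J(u) = ½‖P u − d‖₂² + (μ/2)‖A u − b‖₂² over u ∈ ℝ^N equals (μ/2) (δdʳ)ᵀ (G Gᵀ + μ I)⁻¹ δdʳ, a weighted squared norm of the FWI data residual δdʳ = d − G b. -/
open Matrix

private lemma dotProduct_self_nonneg' {n : ℕ} (v : Fin n → ℝ) : 0 ≤ v ⬝ᵥ v :=
  Finset.sum_nonneg fun i _ => mul_self_nonneg (v i)

/-- Key expansion: with `e = Gᵀ y + h` and `(G Gᵀ) y = r - μ y`,
the quadratic splits as the optimal value plus nonnegative terms. -/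
private lemma quad_expand {M N : ℕ} (G : Matrix (Fin M) (Fin N) ℝ) (μ : ℝ)
    (r y : Fin M → ℝ) (hy : (G * Gᵀ).mulVec y = r - μ • y) (h : Fin N → ℝ) :
    (1/2) * ((G.mulVec (Gᵀ.mulVec y + h) - r) ⬝ᵥ (G.mulVec (Gᵀ.mulVec y + h) - r))
      + (μ/2) * ((Gᵀ.mulVec y + h) ⬝ᵥ (Gᵀ.mulVec y + h))
    = (μ/2) * (r ⬝ᵥ y) + (1/2) * (G.mulVec h ⬝ᵥ G.mulVec h) + (μ/2) * (h ⬝ᵥ h) := by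
  have hGGt : G.mulVec (Gᵀ.mulVec y) = r - μ • y := by
    rw [Matrix.mulVec_mulVec, hy]
  have h1 : G.mulVec (Gᵀ.mulVec y + h) - r = G.mulVec h - μ • y := by
    rw [Matrix.mulVec_add, hGGt]; abel
  have hcross : y ⬝ᵥ G.mulVec h = Gᵀ.mulVec y ⬝ᵥ h := by
    rw [Matrix.dotProduct_mulVec, Matrix.mulVec_transpose]
  have hcc : Gᵀ.mulVec y ⬝ᵥ Gᵀ.mulVec y = r ⬝ᵥ y - μ * (y ⬝ᵥ y) := by
    rw [Matrix.dotProduct_mulVec, Matrix.vecMul_transpose, hGGt,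
      sub_dotProduct, smul_dotProduct, dotProduct_comm r y]
    simp [smul_eq_mul]
  have e1 : G.mulVec h ⬝ᵥ y = Gᵀ.mulVec y ⬝ᵥ h := by
    rw [dotProduct_comm]; exact hcross
  have e2 : h ⬝ᵥ Gᵀ.mulVec y = Gᵀ.mulVec y ⬝ᵥ h := dotProduct_comm _ _
  rw [h1]
  simp only [sub_dotProduct, dotProduct_sub, add_dotProduct,
    dotProduct_add, smul_dotProduct, dotProduct_smul, smul_eq_mul]
  rw [hcross, e1, e2, hcc]
  ring

/-- The minimal value of the penalty objective `J(u) = ½‖P u − d‖₂² + (μ/2)‖A u − b‖₂²`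
over `u ∈ ℝ^N` equals `(μ/2) (δdʳ)ᵀ (G Gᵀ + μ I)⁻¹ δdʳ`, a weighted squared norm of the
FWI data residual `δdʳ = d − G b`, where `G = P A⁻¹`. -/
theorem stmt_9 (N M : ℕ) (_hN : 0 < N) (_hM : 0 < M)
    (A : Matrix (Fin N) (Fin N) ℝ) (hA : IsUnit A)
    (P : Matrix (Fin M) (Fin N) ℝ) (b : Fin N → ℝ) (d : Fin M → ℝ)
    (μ : ℝ) (hμ : 0 < μ)
    (G : Matrix (Fin M) (Fin N) ℝ) (hG : G = P * A⁻¹)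
    (δdr : Fin M → ℝ) (hδ : δdr = d - G.mulVec b)
    (J : (Fin N → ℝ) → ℝ)
    (hJ : ∀ u, J u = (1/2) * ((P.mulVec u - d) ⬝ᵥ (P.mulVec u - d))
        + (μ/2) * ((A.mulVec u - b) ⬝ᵥ (A.mulVec u - b))) :
    IsLeast (Set.range J)
      ((μ/2) * (δdr ⬝ᵥ (G * Gᵀ + μ • (1 : Matrix (Fin M) (Fin M) ℝ))⁻¹.mulVec δdr)) := by
  set S : Matrix (Fin M) (Fin M) ℝ := G * Gᵀ + μ • (1 : Matrix (Fin M) (Fin M) ℝ) with hSdef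
  -- S is invertible
  have hquad : ∀ x : Fin M → ℝ, x ⬝ᵥ S.mulVec x
      = Gᵀ.mulVec x ⬝ᵥ Gᵀ.mulVec x + μ * (x ⬝ᵥ x) := by
    intro x
    rw [hSdef, Matrix.add_mulVec, dotProduct_add, Matrix.smul_mulVec,
      Matrix.one_mulVec, dotProduct_smul, smul_eq_mul, ← Matrix.mulVec_mulVec,
      Matrix.dotProduct_mulVec, Matrix.mulVec_transpose]
  have hSunit : IsUnit S := by
    rw [← Matrix.mulVec_injective_iff_isUnit]
    intro x x' hxx
    have hz : S.mulVec (x - x') = 0 := by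
      rw [Matrix.mulVec_sub, hxx, sub_self]
    have h0 : (x - x') ⬝ᵥ S.mulVec (x - x') = 0 := by rw [hz, dotProduct_zero]
    rw [hquad] at h0
    have h1 : 0 ≤ Gᵀ.mulVec (x - x') ⬝ᵥ Gᵀ.mulVec (x - x') := dotProduct_self_nonneg' _
    have h2 : 0 ≤ (x - x') ⬝ᵥ (x - x') := dotProduct_self_nonneg' _
    have h3 : (x - x') ⬝ᵥ (x - x') = 0 := by nlinarith
    have := dotProduct_self_eq_zero.mp h3
    exact sub_eq_zero.mp this
  set y : Fin M → ℝ := S⁻¹.mulVec δdr with hydef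
  have hSy : S.mulVec y = δdr := by
    rw [hydef, Matrix.mulVec_mulVec, Matrix.mul_nonsing_inv _
      ((Matrix.isUnit_iff_isUnit_det S).mp hSunit), Matrix.one_mulVec]
  have hy : (G * Gᵀ).mulVec y = δdr - μ • y := by
    have : (G * Gᵀ).mulVec y + μ • y = δdr := by
      rw [← hSy, hSdef, Matrix.add_mulVec, Matrix.smul_mulVec, Matrix.one_mulVec]
    linear_combination (norm := module) this
  -- J u in terms of e := A u - b
  have hPA : P = G * A := by
    rw [hG, Matrix.mul_assoc, Matrix.nonsing_inv_mul _ ((Matrix.isUnit_iff_isUnit_det A).mp hA),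
      Matrix.mul_one]
  have hJe : ∀ u : Fin N → ℝ, J u
      = (1/2) * ((G.mulVec (A.mulVec u - b) - δdr) ⬝ᵥ (G.mulVec (A.mulVec u - b) - δdr))
        + (μ/2) * ((A.mulVec u - b) ⬝ᵥ (A.mulVec u - b)) := by
    intro u
    have : P.mulVec u - d = G.mulVec (A.mulVec u - b) - δdr := by
      rw [hδ, hPA, ← Matrix.mulVec_mulVec, Matrix.mulVec_sub]; abel
    rw [hJ u, this]
  -- the value
  have hval : (μ/2) * (δdr ⬝ᵥ S⁻¹.mulVec δdr) = (μ/2) * (δdr ⬝ᵥ y) := by rw [hydef]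
  constructor
  · -- attained at u₀ with A u₀ = b + Gᵀ y
    have hAinv : A⁻¹ * A = 1 :=
      Matrix.nonsing_inv_mul _ ((Matrix.isUnit_iff_isUnit_det A).mp hA)
    have hAAinv : A * A⁻¹ = 1 :=
      Matrix.mul_nonsing_inv _ ((Matrix.isUnit_iff_isUnit_det A).mp hA)
    refine ⟨A⁻¹.mulVec (Gᵀ.mulVec y + b), ?_⟩
    have hAu : A.mulVec (A⁻¹.mulVec (Gᵀ.mulVec y + b)) - b = Gᵀ.mulVec y + 0 := by
      rw [Matrix.mulVec_mulVec, hAAinv, Matrix.one_mulVec]; abel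
    rw [hJe, hAu, quad_expand G μ δdr y hy 0]
    simp [dotProduct_comm δdr y]
  · rintro v ⟨u, rfl⟩
    have he : A.mulVec u - b = Gᵀ.mulVec y + ((A.mulVec u - b) - Gᵀ.mulVec y) := by abel
    rw [hJe, he, quad_expand G μ δdr y hy]
    have h1 := dotProduct_self_nonneg' (G.mulVec ((A.mulVec u - b) - Gᵀ.mulVec y))
    have h2 := dotProduct_self_nonneg' ((A.mulVec u - b) - Gᵀ.mulVec y)
    rw [hval, dotProduct_comm δdr y]
    nlinarith
end

section
/- As μ → ∞, the minimal value (μ/2) (δdʳ)ᵀ (G Gᵀ + μ I)⁻¹ δdʳ of the penalty objective converges to the classical FWI misfit ½‖δdʳ‖₂²; that is, the extended FWI objective reduces to the reduced FWI objective in the limit μ → ∞. -/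
open Matrix Filter Topology

/-
Factor out μ: `μ (A + μ I)⁻¹ = (μ⁻¹ A + I)⁻¹`. The map `t ↦ (t A + I)⁻¹` is continuous at `t = 0`,
where `t A + I = I` is invertible, so `μ (A + μ I)⁻¹ → I` as `μ → ∞`, for every square matrix `A`.
The quadratic form `v ↦ (μ/2) vᵀ (A + μ I)⁻¹ v` therefore tends to `½ vᵀ v`; here `A = G Gᵀ`.
-/

namespace Matrix

variable {n : Type*} [Fintype n] [DecidableEq n]

theorem inv_smul_of_ne_zero {K : Type*} [Field K] (A : Matrix n n K) {k : K} (hk : k ≠ 0) :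
    (k • A)⁻¹ = k⁻¹ • A⁻¹ := by
  by_cases hA : IsUnit A.det
  · exact inv_smul' A (Units.mk0 k hk) hA
  · have hkA : ¬IsUnit (k • A).det := by
      rwa [det_smul, IsUnit.mul_iff, not_and_or, or_iff_right (not_not.mpr (hk.isUnit.pow _))]
    rw [nonsing_inv_apply_not_isUnit _ hA, nonsing_inv_apply_not_isUnit _ hkA, smul_zero]

theorem smul_inv_add_smul_one (A : Matrix n n ℝ) {μ : ℝ} (hμ : μ ≠ 0) :
    μ • (A + μ • 1)⁻¹ = (μ⁻¹ • A + 1)⁻¹ := by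
  have hfactor : A + μ • (1 : Matrix n n ℝ) = μ • (μ⁻¹ • A + 1) := by
    rw [smul_add, smul_smul, mul_inv_cancel₀ hμ, one_smul]
  rw [hfactor, inv_smul_of_ne_zero _ hμ, smul_smul, mul_inv_cancel₀ hμ, one_smul]

theorem continuousAt_inv_smul_add_one (A : Matrix n n ℝ) :
    ContinuousAt (fun t : ℝ => (t • A + 1)⁻¹) 0 := by
  have hinv : ContinuousAt Inv.inv ((0 : ℝ) • A + 1) := by
    refine continuousAt_matrix_inv _ ?_
    rw [zero_smul, zero_add, det_one, ← Units.val_one]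
    exact NormedRing.inverse_continuousAt 1
  exact hinv.comp (f := fun t : ℝ => t • A + 1) (by fun_prop)

theorem tendsto_smul_inv_add_smul_one (A : Matrix n n ℝ) :
    Tendsto (fun μ : ℝ => μ • (A + μ • 1)⁻¹) atTop (𝓝 1) := by
  have hlim : Tendsto (fun μ : ℝ => (μ⁻¹ • A + 1)⁻¹) atTop (𝓝 1) := by
    simpa [Function.comp_def] using
      (continuousAt_inv_smul_add_one A).tendsto.comp tendsto_inv_atTop_zero
  refine hlim.congr' ?_
  filter_upwards [eventually_ne_atTop 0] with μ hμ
  exact (smul_inv_add_smul_one A hμ).symm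

end Matrix

theorem stmt_12_general (N M : ℕ)
    (G : Matrix (Fin M) (Fin N) ℝ) (δdr : Fin M → ℝ) :
    Filter.Tendsto
      (fun μ : ℝ =>
        (μ/2) * (δdr ⬝ᵥ (G * Gᵀ + μ • (1 : Matrix (Fin M) (Fin M) ℝ))⁻¹.mulVec δdr))
      Filter.atTop (nhds ((1/2) * (δdr ⬝ᵥ δdr))) := by
  have hform : Continuous fun B : Matrix (Fin M) (Fin M) ℝ => (1/2) * (δdr ⬝ᵥ B *ᵥ δdr) := by
    fun_prop
  have hlim := (hform.tendsto 1).comp (tendsto_smul_inv_add_smul_one (G * Gᵀ))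
  rw [one_mulVec] at hlim
  refine hlim.congr fun μ => ?_
  simp only [Function.comp_apply, smul_mulVec, dotProduct_smul, smul_eq_mul]
  ring

/-- As `μ → ∞`, the minimal value `(μ/2) (δdʳ)ᵀ (G Gᵀ + μ I)⁻¹ δdʳ` of the penalty
objective converges to the classical FWI misfit `½‖δdʳ‖₂²`. -/
theorem stmt_12 (N M : ℕ) (_hN : 0 < N) (_hM : 0 < M)
    (G : Matrix (Fin M) (Fin N) ℝ) (δdr : Fin M → ℝ) :
    Filter.Tendsto
      (fun μ : ℝ =>
        (μ/2) * (δdr ⬝ᵥ (G * Gᵀ + μ • (1 : Matrix (Fin M) (Fin M) ℝ))⁻¹.mulVec δdr))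
      Filter.atTop (nhds ((1/2) * (δdr ⬝ᵥ δdr))) :=
  stmt_12_general N M G δdr
end

section
/- Let Q = G Gᵀ + μ I. For any p, r ∈ ℝ^M, set s = r + (1/μ) Q p. Then the unique global minimizer of the function f(x) = ½‖x − s‖₂² + (1/(2μ))‖Gᵀ x‖₂² on ℝ^M is x* = p + μ Q⁻¹ r; i.e., the augmented Lagrangian data update is a Newton-like step from p in the direction Q⁻¹ r. -/
/-!
`f` is the quadratic `½‖x - s‖² + (c/2)‖Gᵀ x‖²` with `c = 1/μ`. If `x₀` is a stationary point,
`x₀ + c G Gᵀ x₀ = s`, the cross terms in the expansion of `f` about `x₀` cancel and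
`f x = f x₀ + ½‖x - x₀‖² + (c/2)‖Gᵀ (x - x₀)‖²`, so `x₀` is the unique minimizer. Multiplying the
stationarity equation by `μ` turns it into `Q x₀ = μ s`, which `x₀ = p + μ Q⁻¹ r` satisfies since
`Q = G Gᵀ + μ I` is positive definite, hence invertible.
-/

open Matrix

namespace Matrix

variable {m n : Type*} [Fintype m] [Fintype n]

lemma dotProduct_self_nonneg_real (v : n → ℝ) : 0 ≤ v ⬝ᵥ v := by
  simpa using dotProduct_star_self_nonneg v

lemma dotProduct_mul_transpose_mulVec (A : Matrix m n ℝ) (v w : m → ℝ) :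
    v ⬝ᵥ (A * Aᵀ) *ᵥ w = Aᵀ *ᵥ v ⬝ᵥ Aᵀ *ᵥ w := by
  rw [← mulVec_mulVec, dotProduct_mulVec, ← mulVec_transpose]

lemma posDef_mul_transpose_add_smul_one [DecidableEq m] (A : Matrix m n ℝ) {μ : ℝ} (hμ : 0 < μ) :
    (A * Aᵀ + μ • (1 : Matrix m m ℝ)).PosDef := by
  have hAAt : (A * Aᵀ).PosSemidef := by
    simpa only [conjTranspose_eq_transpose_of_trivial] using posSemidef_self_mul_conjTranspose A
  exact PosDef.posSemidef_add hAAt (PosDef.one.smul hμ)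

lemma add_smul_mul_transpose_mulVec_of_mulVec_eq [DecidableEq m] {A : Matrix m n ℝ} {μ : ℝ}
    (hμ : μ ≠ 0) {x s : m → ℝ} (h : (A * Aᵀ + μ • (1 : Matrix m m ℝ)) *ᵥ x = μ • s) :
    x + (1 / μ) • (A * Aᵀ) *ᵥ x = s := by
  rw [add_mulVec, smul_mulVec, one_mulVec] at h
  apply smul_right_injective _ hμ
  dsimp only
  rw [smul_add, smul_smul, mul_one_div_cancel hμ, one_smul, ← h, add_comm]

end Matrix

section ProximalObjective

variable {m n : Type*} [Fintype m] [Fintype n]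

noncomputable def proxObjective (A : Matrix m n ℝ) (c : ℝ) (s x : m → ℝ) : ℝ :=
  (1 / 2) * ((x - s) ⬝ᵥ (x - s)) + c / 2 * (Aᵀ *ᵥ x ⬝ᵥ Aᵀ *ᵥ x)

variable {A : Matrix m n ℝ} {c : ℝ} {s x₀ : m → ℝ}

lemma proxObjective_eq_add_of_stationary (h : x₀ + c • (A * Aᵀ) *ᵥ x₀ = s) (x : m → ℝ) :
    proxObjective A c s x = proxObjective A c s x₀ + (1 / 2) * ((x - x₀) ⬝ᵥ (x - x₀))
      + c / 2 * (Aᵀ *ᵥ (x - x₀) ⬝ᵥ Aᵀ *ᵥ (x - x₀)) := by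
  obtain ⟨d, rfl⟩ : ∃ d, x = x₀ + d := ⟨x - x₀, by abel⟩
  have hcross := dotProduct_mul_transpose_mulVec A d x₀
  have hx₀s : x₀ - s = -(c • (A * Aᵀ) *ᵥ x₀) := by rw [← h]; abel
  have hds : x₀ + d - s = d + (x₀ - s) := by abel
  simp only [proxObjective, add_sub_cancel_left, hds, hx₀s, mulVec_add, dotProduct_add,
    add_dotProduct, dotProduct_neg, neg_dotProduct, dotProduct_smul, smul_dotProduct,
    smul_eq_mul, hcross, dotProduct_comm _ d, dotProduct_comm (Aᵀ *ᵥ x₀) (Aᵀ *ᵥ d)]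
  ring

lemma proxObjective_unique_min_of_stationary (hc : 0 ≤ c) (h : x₀ + c • (A * Aᵀ) *ᵥ x₀ = s) :
    (∀ x, proxObjective A c s x₀ ≤ proxObjective A c s x) ∧
      ∀ y, (∀ x, proxObjective A c s y ≤ proxObjective A c s x) → y = x₀ := by
  have hexcess (x : m → ℝ) : 0 ≤ c / 2 * (Aᵀ *ᵥ (x - x₀) ⬝ᵥ Aᵀ *ᵥ (x - x₀)) :=
    mul_nonneg (by positivity) (dotProduct_self_nonneg_real _)
  refine ⟨fun x => ?_, fun y hy => ?_⟩
  · rw [proxObjective_eq_add_of_stationary h x]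
    linarith [dotProduct_self_nonneg_real (x - x₀), hexcess x]
  · have hy₀ := hy x₀
    rw [proxObjective_eq_add_of_stationary h y] at hy₀
    have hzero : (y - x₀) ⬝ᵥ (y - x₀) = 0 := by
      linarith [dotProduct_self_nonneg_real (y - x₀), hexcess y]
    exact sub_eq_zero.mp (dotProduct_self_eq_zero.mp hzero)

end ProximalObjective

theorem stmt_13_general (N M : ℕ)
    (G : Matrix (Fin M) (Fin N) ℝ) (μ : ℝ) (hμ : 0 < μ)
    (Q : Matrix (Fin M) (Fin M) ℝ)
    (hQ : Q = G * Gᵀ + μ • (1 : Matrix (Fin M) (Fin M) ℝ))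
    (p r : Fin M → ℝ) (s : Fin M → ℝ) (hs : s = r + (1/μ) • Q.mulVec p)
    (f : (Fin M → ℝ) → ℝ)
    (hf : ∀ x, f x = (1/2) * ((x - s) ⬝ᵥ (x - s))
        + (1/(2*μ)) * (Gᵀ.mulVec x ⬝ᵥ Gᵀ.mulVec x)) :
    (∀ x, f (p + μ • Q⁻¹.mulVec r) ≤ f x) ∧
    (∀ y, (∀ x, f y ≤ f x) → y = p + μ • Q⁻¹.mulVec r) := by
  have hf' : f = proxObjective G (1 / μ) s := by
    ext x
    rw [hf, proxObjective]
    ring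
  have hQpd : Q.PosDef := hQ ▸ posDef_mul_transpose_add_smul_one G hμ
  have hQinv : Q * Q⁻¹ = 1 := mul_nonsing_inv Q <| (isUnit_iff_isUnit_det Q).mp hQpd.isUnit
  have hstat : (p + μ • Q⁻¹ *ᵥ r) + (1 / μ) • (G * Gᵀ) *ᵥ (p + μ • Q⁻¹ *ᵥ r) = s := by
    refine add_smul_mul_transpose_mulVec_of_mulVec_eq hμ.ne' ?_
    rw [← hQ, hs, mulVec_add, mulVec_smul, mulVec_mulVec, hQinv, one_mulVec, smul_add, smul_smul,
      mul_one_div_cancel hμ.ne', one_smul, add_comm]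
  rw [hf']
  exact proxObjective_unique_min_of_stationary (by positivity) hstat

/-- Let `Q = G Gᵀ + μ I`. For any `p, r ∈ ℝ^M`, set `s = r + (1/μ) Q p`. Then the unique
global minimizer of `f(x) = ½‖x − s‖₂² + (1/(2μ))‖Gᵀ x‖₂²` on `ℝ^M` is `x* = p + μ Q⁻¹ r`;
i.e., the augmented Lagrangian data update is a Newton-like step from `p` in the direction
`Q⁻¹ r`. -/
theorem stmt_13 (N M : ℕ) (_hN : 0 < N) (_hM : 0 < M)
    (G : Matrix (Fin M) (Fin N) ℝ) (μ : ℝ) (hμ : 0 < μ)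
    (Q : Matrix (Fin M) (Fin M) ℝ)
    (hQ : Q = G * Gᵀ + μ • (1 : Matrix (Fin M) (Fin M) ℝ))
    (p r : Fin M → ℝ) (s : Fin M → ℝ) (hs : s = r + (1/μ) • Q.mulVec p)
    (f : (Fin M → ℝ) → ℝ)
    (hf : ∀ x, f x = (1/2) * ((x - s) ⬝ᵥ (x - s))
        + (1/(2*μ)) * (Gᵀ.mulVec x ⬝ᵥ Gᵀ.mulVec x)) :
    (∀ x, f (p + μ • Q⁻¹.mulVec r) ≤ f x) ∧
    (∀ y, (∀ x, f y ≤ f x) → y = p + μ • Q⁻¹.mulVec r) :=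
  stmt_13_general N M G μ hμ Q hQ p r s hs f hf
end

section
/- For any M×N real matrix G, any μ > 0, and any v ∈ ℝ^M, the deblurring operator satisfies ‖μ (G Gᵀ + μ I)⁻¹ v‖₂ ≤ ‖v‖₂; i.e., the map v ↦ μ(G Gᵀ + μ I)⁻¹ v is a contraction, so the WRI data residual δdᵉ = μ(G Gᵀ + μ I)⁻¹ δdʳ is never larger in norm than the FWI data residual δdʳ. -/
/-!
With `w = (A + μ I)⁻¹ v` for a positive semidefinite `A` (here `A = G Gᵀ`), we have
`re ⟪w, v⟫ = re ⟪w, A w⟫ + μ ‖w‖² ≥ μ ‖w‖²`, and Cauchy–Schwarz turns this into `μ ‖w‖ ≤ ‖v‖`.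
-/

open Matrix RCLike
open scoped InnerProductSpace ComplexOrder

theorem norm_le_of_mul_norm_sq_le_re_inner {𝕜 E : Type*} [RCLike 𝕜] [SeminormedAddCommGroup E]
    [InnerProductSpace 𝕜 E] {μ : ℝ} {w u : E} (h : μ * ‖w‖ ^ 2 ≤ re ⟪w, u⟫_𝕜) :
    μ * ‖w‖ ≤ ‖u‖ := by
  rcases (norm_nonneg w).eq_or_lt with hw | hw
  · simp [← hw]
  · have := h.trans (re_inner_le_norm w u)
    exact le_of_mul_le_mul_right (by nlinarith) hw

namespace Matrix.PosSemidef

variable {𝕜 n : Type*} [RCLike 𝕜] [Fintype n] [DecidableEq n] {A : Matrix n n 𝕜}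

theorem mul_norm_sq_le_re_inner_add_smul_one_mulVec (hA : A.PosSemidef) (μ : ℝ) (w : n → 𝕜) :
    μ * ‖WithLp.toLp 2 w‖ ^ 2 ≤
      re ⟪WithLp.toLp 2 w, WithLp.toLp 2 ((A + μ • (1 : Matrix n n 𝕜)) *ᵥ w)⟫_𝕜 := by
  have hAw : 0 ≤ re ⟪WithLp.toLp 2 w, WithLp.toLp 2 (A *ᵥ w)⟫_𝕜 := by
    rw [EuclideanSpace.inner_toLp_toLp, dotProduct_comm]
    exact (nonneg_iff.mp (hA.dotProduct_mulVec_nonneg w)).1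
  rw [add_mulVec, smul_mulVec, one_mulVec, WithLp.toLp_add, WithLp.toLp_smul, inner_add_right,
    inner_smul_right_eq_smul, map_add, RCLike.smul_re, inner_self_eq_norm_sq]
  linarith

theorem norm_smul_inv_add_smul_one_mulVec_le (hA : A.PosSemidef) {μ : ℝ} (hμ : 0 < μ)
    (v : EuclideanSpace 𝕜 n) :
    ‖WithLp.toLp 2 (μ • (A + μ • (1 : Matrix n n 𝕜))⁻¹ *ᵥ v.ofLp)‖ ≤ ‖v‖ := by
  set B := A + μ • (1 : Matrix n n 𝕜)
  have hB : B.PosDef := PosDef.posSemidef_add hA (PosDef.one.smul hμ)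
  set w := B⁻¹ *ᵥ v.ofLp
  have hBw : B *ᵥ w = v.ofLp := by
    rw [mulVec_mulVec, mul_nonsing_inv _ hB.det_pos.ne'.isUnit, one_mulVec]
  have key := hA.mul_norm_sq_le_re_inner_add_smul_one_mulVec μ w
  rw [hBw] at key
  rw [WithLp.toLp_smul, norm_smul, Real.norm_of_nonneg hμ.le]
  exact norm_le_of_mul_norm_sq_le_re_inner key

end Matrix.PosSemidef

theorem stmt_16_general (N M : ℕ)
    (G : Matrix (Fin M) (Fin N) ℝ) (μ : ℝ) (hμ : 0 < μ)
    (v : EuclideanSpace ℝ (Fin M)) :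
    ‖((WithLp.equiv 2 (Fin M → ℝ)).symm
        (μ • (G * Gᵀ + μ • (1 : Matrix (Fin M) (Fin M) ℝ))⁻¹.mulVec
          (WithLp.equiv 2 (Fin M → ℝ) v)))‖ ≤ ‖v‖ := by
  have hG : (G * Gᵀ).PosSemidef := by
    simpa using posSemidef_self_mul_conjTranspose G
  exact hG.norm_smul_inv_add_smul_one_mulVec_le hμ v

/-- For any M×N real matrix `G`, any `μ > 0`, and any `v ∈ ℝ^M`, the deblurring operator
satisfies `‖μ (G Gᵀ + μ I)⁻¹ v‖₂ ≤ ‖v‖₂`; i.e., the map `v ↦ μ(G Gᵀ + μ I)⁻¹ v` is a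
contraction, so the WRI data residual is never larger in norm than the FWI data residual. -/
theorem stmt_16 (N M : ℕ) (_hN : 0 < N) (_hM : 0 < M)
    (G : Matrix (Fin M) (Fin N) ℝ) (μ : ℝ) (hμ : 0 < μ)
    (v : EuclideanSpace ℝ (Fin M)) :
    ‖((WithLp.equiv 2 (Fin M → ℝ)).symm
        (μ • (G * Gᵀ + μ • (1 : Matrix (Fin M) (Fin M) ℝ))⁻¹.mulVec
          (WithLp.equiv 2 (Fin M → ℝ) v)))‖ ≤ ‖v‖ :=
  stmt_16_general N M G μ hμ v
end
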